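/- Let s, t ∈ ℕᵃ with sᵢ ≤ tᵢ for all i, let N = |S(s,t)|, and identify each shuffle on S(s,t) with the unique order-isomorphism f : ({1,…,N}, ≤) → (S(s,t), ⪯). For a shuffle f and 1 ≤ p ≤ N−1, define f · β_p := f ∘ s_p if π₁(f(p)) > π₁(f(p+1)) (where s_p ∈ S_N swaps p and p+1 and π₁(i|k) = i), and f · β_p := ∗ otherwise, where ∗ is an added basepoint with ∗ · β_p = ∗. Then: (a) whenever π₁(f(p)) > π₁(f(p+1)), the composite f ∘ s_p is again (the order-isomorphism of) a shuffle on S(s,t); (b) this assignment, together with 0 acting as the constant map at ∗, extends to a right action of the braid monoid with zero 𝔹_N on the set of shuffles on S(s,t) together with ∗; and (c) for every non-zero x ∈ 𝔹_N and every shuffle f, either f · x = f ∘ σ_x or f · x = ∗, where σ : 𝔹_N ∖ {0} → S_N is the function with σ_{β_p} = s_p and σ_{xy} = σ_x ∘ σ_y. -/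

import Mathlib

/-!
The braid monoid with zero `𝔹ₙ`, realized as the quotient of the free monoid on
letters `β₁, …, β_{n−1}, z` by the congruence generated by the braid relations,
`β_p β_p = 0`, `β_p z = z = z β_p` and `z z = z`, with `0 := z`.

Statement 0: every non-zero element `x ∈ 𝔹ₙ` can be written as
`x = β_{1,q₁} ⋯ β_{n−1, q_{n−1}}` with `1 ≤ q_p ≤ p + 1`, and the tuple
`(q₁, …, q_{n−1})` satisfying these bounds is uniquely determined by `x`.
-/

namespace BraidMonoidZero

/-- Letters: `some i` is the generator `β_{i+1}` (for `i : Fin (n-1)`), `none` is `z`. -/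
abbrev Letter (n : ℕ) := Option (Fin (n - 1))

/-- The defining relations of the braid monoid with zero. -/
inductive Rel (n : ℕ) : FreeMonoid (Letter n) → FreeMonoid (Letter n) → Prop
  | comm (i j : Fin (n - 1)) (h : i.val + 1 < j.val) :
      Rel n (FreeMonoid.of (some j) * FreeMonoid.of (some i))
            (FreeMonoid.of (some i) * FreeMonoid.of (some j))
  | braid (i j : Fin (n - 1)) (h : j.val = i.val + 1) :
      Rel n (FreeMonoid.of (some j) * FreeMonoid.of (some i) * FreeMonoid.of (some j))
            (FreeMonoid.of (some i) * FreeMonoid.of (some j) * FreeMonoid.of (some i))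
  | square (i : Fin (n - 1)) :
      Rel n (FreeMonoid.of (some i) * FreeMonoid.of (some i)) (FreeMonoid.of none)
  | zright (i : Fin (n - 1)) :
      Rel n (FreeMonoid.of (some i) * FreeMonoid.of none) (FreeMonoid.of none)
  | zleft (i : Fin (n - 1)) :
      Rel n (FreeMonoid.of none * FreeMonoid.of (some i)) (FreeMonoid.of none)
  | zz : Rel n (FreeMonoid.of none * FreeMonoid.of none) (FreeMonoid.of none)

/-- The congruence generated by the defining relations. -/
def bmzCon (n : ℕ) : Con (FreeMonoid (Letter n)) := conGen (Rel n)

/-- The braid monoid with zero `𝔹ₙ`. -/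
abbrev BMZ (n : ℕ) := (bmzCon n).Quotient

/-- The zero element `0 = z` of `𝔹ₙ`. -/
def zero (n : ℕ) : BMZ n := (bmzCon n).mk' (FreeMonoid.of none)

/-- The generator `β_{i+1}` of `𝔹ₙ` (so subscripts range over `1, …, n-1`). -/
def gen (n : ℕ) (i : Fin (n - 1)) : BMZ n := (bmzCon n).mk' (FreeMonoid.of (some i))

/-- The generator `β_r`, indexed by its 1-based subscript `r ∈ {1, …, n-1}`. -/
def genNat (n r : ℕ) : BMZ n := if h : r - 1 < n - 1 then gen n ⟨r - 1, h⟩ else 1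

/-- `betaSeg n p q` is `β_{p,q} = β_p β_{p-1} ⋯ β_q` (the identity when `q = p + 1`). -/
def betaSeg (n p q : ℕ) : BMZ n :=
  ((List.range' q (p + 1 - q)).reverse.map (genNat n)).prod

/-- The product `β_{1,q₁} · β_{2,q₂} · ⋯ · β_{n−1,q_{n−1}}`, where the value `q i`
corresponds to `q_{i+1}` for `i : Fin (n-1)`. -/
def normalProd (n : ℕ) (q : Fin (n - 1) → ℕ) : BMZ n :=
  ((List.finRange (n - 1)).map (fun i => betaSeg n (i.val + 1) (q i))).prod

/-- The transposition `(p, p+1)` of `{1, …, n}` associated to the generator `β_p`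
(`i : Fin (n-1)` corresponds to `p = i + 1`; in `Fin n` it swaps positions `i` and `i+1`). -/
def swapAt (n : ℕ) (i : Fin (n - 1)) : Equiv.Perm (Fin n) :=
  Equiv.swap ⟨i.val, lt_of_lt_of_le i.isLt (Nat.sub_le n 1)⟩
    ⟨i.val + 1, by have h := i.isLt; omega⟩

/-- The monoid homomorphism `σ̃` from the free monoid on `β₁, …, β_{n−1}` to `Sₙ`
sending `β_p` to the transposition `(p, p+1)`.  Note that multiplication of
permutations is composition, so `σ̃(xy) = σ̃(x) ∘ σ̃(y)`. -/
def permHom (n : ℕ) : FreeMonoid (Fin (n - 1)) →* Equiv.Perm (Fin n) :=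
  FreeMonoid.lift (fun i => swapAt n i)

/-- The canonical monoid homomorphism from the free monoid on `β₁, …, β_{n−1}` to `𝔹ₙ`. -/
def toBMZ (n : ℕ) : FreeMonoid (Fin (n - 1)) →* BMZ n :=
  FreeMonoid.lift (fun i => gen n i)


/-! ### Shuffles, identified with their enumerating order-isomorphisms -/

/-- The set `S(s,t)`: pairs `(i|k)` with `sᵢ < k ≤ tᵢ`. -/
def Idx (a : ℕ) (s t : Fin a → ℕ) : Type :=
  {p : Fin a × ℕ // s p.1 < p.2 ∧ p.2 ≤ t p.1}

/-- A shuffle on `S(s,t)`, identified with the unique order-isomorphism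
`f : ({1,…,N}, ≤) → (S(s,t), ⪯)`: a bijection `Fin N → S(s,t)` which is increasing in
the second coordinate on elements with the same first coordinate. -/
def ShuffleEnum (a : ℕ) (s t : Fin a → ℕ) (N : ℕ) : Type :=
  {f : Fin N → Idx a s t // Function.Bijective f ∧
    ∀ p q : Fin N, (f p).1.1 = (f q).1.1 → p ≤ q → (f p).1.2 ≤ (f q).1.2}

/-- The position `p` (as an element of `Fin N`) for `p : Fin (N-1)`. -/
def lo (N : ℕ) (j : Fin (N - 1)) : Fin N := ⟨j.val, by have h := j.isLt; omega⟩

/-- The position `p + 1` (as an element of `Fin N`) for `p : Fin (N-1)`. -/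
def hi (N : ℕ) (j : Fin (N - 1)) : Fin N := ⟨j.val + 1, by have h := j.isLt; omega⟩

/-- The condition `π₁(f(p)) > π₁(f(p+1))` under which `f · β_p = f ∘ s_p`. -/
def Descends {a : ℕ} {s t : Fin a → ℕ} {N : ℕ} (f : ShuffleEnum a s t N)
    (j : Fin (N - 1)) : Prop :=
  (f.1 (hi N j)).1.1 < (f.1 (lo N j)).1.1

/-
A shuffle `f` is acted on by a word `β_{j₁} ⋯ β_{j_k}` by successively swapping adjacent
positions, each swap being allowed only at a descent of the current colouring
`p ↦ π₁(f p)`. Hence the word sends `f` to `f ∘ s_{j₁} ∘ ⋯ ∘ s_{j_k}` when every swap is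
allowed, and to `∗` otherwise. Whether every swap is allowed is a property of the colouring
alone, so the action descends to `𝔹_N` once each defining relation has the same admissible
colourings on both sides, and the same permutation where admissible: `β_p β_p` is never
admissible (the second swap undoes a descent), commuting generators look at disjoint
positions, and both sides of the braid relation at `p` are admissible exactly when the colours
at `p, p+1, p+2` strictly decrease, where both sides reverse these three positions.
-/

section Positions

variable {N : ℕ}

lemma swapAt_eq_swap (j : Fin (N - 1)) : swapAt N j = Equiv.swap (lo N j) (hi N j) := rfl

@[simp] lemma swapAt_lo (j : Fin (N - 1)) : swapAt N j (lo N j) = hi N j :=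
  Equiv.swap_apply_left _ _

@[simp] lemma swapAt_hi (j : Fin (N - 1)) : swapAt N j (hi N j) = lo N j :=
  Equiv.swap_apply_right _ _

lemma swapAt_apply_of_ne {j : Fin (N - 1)} {p : Fin N} (hlo : p.val ≠ j.val)
    (hhi : p.val ≠ j.val + 1) : swapAt N j p = p :=
  Equiv.swap_apply_of_ne_of_ne (by simpa [lo, Fin.ext_iff]) (by simpa [hi, Fin.ext_iff])

lemma swapAt_le_swapAt {j : Fin (N - 1)} {p q : Fin N} (hpq : p ≤ q)
    (hne : ¬(p = lo N j ∧ q = hi N j)) : swapAt N j p ≤ swapAt N j q := by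
  simp only [swapAt_eq_swap, Equiv.swap_apply_def, lo, hi, Fin.ext_iff, Fin.le_def,
    apply_ite Fin.val] at *
  split_ifs <;> omega

lemma swapAt_commute {i j : Fin (N - 1)} (h : i.val + 1 < j.val) :
    Commute (swapAt N i) (swapAt N j) := by
  have hnodup : [lo N i, hi N i, lo N j, hi N j].Nodup := by
    simp [lo, hi, Fin.ext_iff]
    omega
  exact (Equiv.Perm.disjoint_swap_swap hnodup).commute

lemma hi_eq_lo_of_succ {i j : Fin (N - 1)} (h : j.val = i.val + 1) : hi N i = lo N j := by
  simp [lo, hi, h]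

lemma swapAt_braid {i j : Fin (N - 1)} (h : j.val = i.val + 1) :
    swapAt N j * swapAt N i * swapAt N j = swapAt N i * swapAt N j * swapAt N i := by
  have h₁ : lo N i ≠ hi N i := by simp [lo, hi, Fin.ext_iff]
  have h₂ : lo N i ≠ hi N j := by simp [lo, hi, Fin.ext_iff]; omega
  have h₃ : hi N j ≠ hi N i := by simp [hi, Fin.ext_iff]; omega
  simp only [swapAt_eq_swap, ← hi_eq_lo_of_succ h]
  rw [Equiv.swap_mul_swap_mul_swap h₁ h₂, Equiv.swap_comm (lo N i) (hi N i),
    Equiv.swap_comm (hi N i) (hi N j), Equiv.swap_mul_swap_mul_swap h₃ h₂.symm, Equiv.swap_comm]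

def letterPerm : Letter N → Equiv.Perm (Fin N)
  | none => 1
  | some j => swapAt N j

def wordPerm (w : List (Letter N)) : Equiv.Perm (Fin N) := (w.map letterPerm).prod

lemma wordPerm_cons (x : Letter N) (w : List (Letter N)) :
    wordPerm (x :: w) = letterPerm x * wordPerm w :=
  List.prod_cons

lemma wordPerm_map_some (u : FreeMonoid (Fin (N - 1))) :
    wordPerm (u.toList.map some) = permHom N u := by
  rw [wordPerm, permHom, FreeMonoid.lift_apply, List.map_map]
  rfl

end Positions

section Colourings

variable {α : Type*} [LinearOrder α] {N : ℕ}

def IsDescentAt (c : Fin N → α) (j : Fin (N - 1)) : Prop := c (hi N j) < c (lo N j)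

def Admissible : (Fin N → α) → List (Letter N) → Prop
  | _, [] => True
  | _, none :: _ => False
  | c, some j :: w => IsDescentAt c j ∧ Admissible (c ∘ swapAt N j) w

lemma not_admissible_square (c : Fin N → α) (i : Fin (N - 1)) :
    ¬ Admissible c [some i, some i] := by
  rintro ⟨hdesc, hdesc', -⟩
  simp only [IsDescentAt, Function.comp, swapAt_lo, swapAt_hi] at hdesc hdesc'
  exact hdesc.asymm hdesc'

lemma isDescentAt_comp_swapAt_of_far {i j : Fin (N - 1)}
    (h : i.val + 1 < j.val ∨ j.val + 1 < i.val) (c : Fin N → α) :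
    IsDescentAt (c ∘ swapAt N j) i ↔ IsDescentAt c i := by
  have hlo : swapAt N j (lo N i) = lo N i :=
    swapAt_apply_of_ne (by simp [lo]; omega) (by simp [lo]; omega)
  have hhi : swapAt N j (hi N i) = hi N i :=
    swapAt_apply_of_ne (by simp [hi]; omega) (by simp [hi]; omega)
  simp only [IsDescentAt, Function.comp, hlo, hhi]

lemma admissible_comm {i j : Fin (N - 1)} (h : i.val + 1 < j.val) (c : Fin N → α) :
    Admissible c [some j, some i] ↔ Admissible c [some i, some j] := by
  simp only [Admissible, isDescentAt_comp_swapAt_of_far (.inl h),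
    isDescentAt_comp_swapAt_of_far (.inr h), and_true]
  exact and_comm

lemma admissible_braid {i j : Fin (N - 1)} (h : j.val = i.val + 1) (c : Fin N → α) :
    Admissible c [some j, some i, some j] ↔ Admissible c [some i, some j, some i] := by
  have hij := hi_eq_lo_of_succ h
  have hj : swapAt N j (lo N i) = lo N i :=
    swapAt_apply_of_ne (by simp [lo]; omega) (by simp [lo]; omega)
  have hi' : swapAt N i (hi N j) = hi N j :=
    swapAt_apply_of_ne (by simp [hi]; omega) (by simp [hi]; omega)
  have hlo : swapAt N i (lo N j) = lo N i := by rw [← hij, swapAt_hi]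
  simp only [Admissible, IsDescentAt, Function.comp, hij, swapAt_lo, swapAt_hi, hj, hi', hlo,
    and_true]
  tauto

lemma Rel.admissible_iff {u v : FreeMonoid (Letter N)} (h : Rel N u v) (c : Fin N → α) :
    Admissible c u.toList ↔ Admissible c v.toList := by
  cases h with
  | comm i j hij => exact admissible_comm hij c
  | braid i j hij => exact admissible_braid hij c
  | square i => exact iff_of_false (not_admissible_square c i) id
  | zright i | zleft i | zz => simp [Admissible]

lemma Rel.wordPerm_eq {u v : FreeMonoid (Letter N)} (h : Rel N u v) {c : Fin N → α}
    (hadm : Admissible c u.toList) : wordPerm u.toList = wordPerm v.toList := by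
  cases h with
  | comm i j hij => exact (swapAt_commute hij).symm.eq
  | braid i j hij => exact swapAt_braid hij
  | square i => exact absurd hadm (not_admissible_square c i)
  | zright i | zleft i | zz => simp [Admissible] at hadm

end Colourings

section Shuffles

variable {a : ℕ} {s t : Fin a → ℕ} {N : ℕ}

def colour (f : ShuffleEnum a s t N) (p : Fin N) : Fin a := (f.1 p).1.1

instance (f : ShuffleEnum a s t N) (j : Fin (N - 1)) : Decidable (Descends f j) :=
  inferInstanceAs (Decidable (_ < _))

lemma descends_iff_isDescentAt (f : ShuffleEnum a s t N) (j : Fin (N - 1)) :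
    Descends f j ↔ IsDescentAt (colour f) j := Iff.rfl

def swapShuffle (f : ShuffleEnum a s t N) (j : Fin (N - 1))
    (h : colour f (lo N j) ≠ colour f (hi N j)) : ShuffleEnum a s t N :=
  ⟨f.1 ∘ swapAt N j, f.2.1.comp (swapAt N j).bijective, fun p q hcol hpq => by
    by_cases hpos : p = lo N j ∧ q = hi N j
    · obtain ⟨rfl, rfl⟩ := hpos
      simp only [Function.comp, swapAt_lo, swapAt_hi] at hcol
      exact absurd hcol.symm h
    · exact f.2.2 _ _ hcol (swapAt_le_swapAt hpq hpos)⟩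

def step : Option (ShuffleEnum a s t N) → Letter N → Option (ShuffleEnum a s t N)
  | some f, some j => if h : Descends f j then some (swapShuffle f j h.ne') else none
  | _, _ => none

def wordAct (o : Option (ShuffleEnum a s t N)) (w : List (Letter N)) :
    Option (ShuffleEnum a s t N) :=
  w.foldl step o

lemma wordAct_append (o : Option (ShuffleEnum a s t N)) (u v : List (Letter N)) :
    wordAct o (u ++ v) = wordAct (wordAct o u) v :=
  List.foldl_append

lemma wordAct_none (w : List (Letter N)) :
    wordAct (none : Option (ShuffleEnum a s t N)) w = none := by
  induction w with
  | nil => rfl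
  | cons x w ih => cases x <;> exact ih

theorem wordAct_eq_some_iff (f g : ShuffleEnum a s t N) (w : List (Letter N)) :
    wordAct (some f) w = some g ↔ Admissible (colour f) w ∧ g.1 = f.1 ∘ wordPerm w := by
  induction w generalizing f with
  | nil =>
    simp only [wordAct, List.foldl_nil, Option.some.injEq, Admissible, wordPerm, List.map_nil,
      List.prod_nil, Equiv.Perm.coe_one, Function.comp_id, true_and, eq_comm]
    exact Subtype.ext_iff
  | cons x w ih =>
    change wordAct (step (some f) x) w = some g ↔ _
    rcases x with _ | j
    · simp only [step, wordAct_none, reduceCtorEq, Admissible, false_and]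
    · rw [wordPerm_cons, Equiv.Perm.coe_mul, ← Function.comp_assoc]
      by_cases hdesc : Descends f j
      · rw [step, dif_pos hdesc, ih]
        exact and_congr_left' (and_iff_right ((descends_iff_isDescentAt f j).1 hdesc)).symm
      · simp only [step, dif_neg hdesc, wordAct_none, reduceCtorEq, false_iff, Admissible]
        exact fun h => hdesc ((descends_iff_isDescentAt f j).2 h.1.1)

lemma wordAct_eq_of_rel {u v : FreeMonoid (Letter N)} (h : Rel N u v)
    (o : Option (ShuffleEnum a s t N)) : wordAct o u.toList = wordAct o v.toList := by
  rcases o with _ | f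
  · rw [wordAct_none, wordAct_none]
  · ext g
    rw [wordAct_eq_some_iff, wordAct_eq_some_iff, h.admissible_iff]
    exact and_congr_right fun hadm => by rw [h.wordPerm_eq ((h.admissible_iff _).2 hadm)]

variable (a s t N) in
def actionCon : Con (FreeMonoid (Letter N)) where
  r u v := ∀ o : Option (ShuffleEnum a s t N), wordAct o u.toList = wordAct o v.toList
  iseqv := ⟨fun _ _ => rfl, fun h o => (h o).symm, fun h₁ h₂ o => (h₁ o).trans (h₂ o)⟩
  mul' h₁ h₂ o := by
    simp only [FreeMonoid.toList_mul, wordAct_append, h₁ o, h₂]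

lemma bmzCon_le_actionCon : bmzCon N ≤ actionCon a s t N :=
  Con.conGen_le.2 fun _ _ h => wordAct_eq_of_rel h

def act (o : Option (ShuffleEnum a s t N)) (x : BMZ N) : Option (ShuffleEnum a s t N) :=
  Con.liftOn x (fun w => wordAct o w.toList) fun _ _ h => bmzCon_le_actionCon h o

lemma act_one (o : Option (ShuffleEnum a s t N)) : act o 1 = o := rfl

lemma act_mul (o : Option (ShuffleEnum a s t N)) (x y : BMZ N) :
    act o (x * y) = act (act o x) y := by
  induction x using Con.induction_on
  induction y using Con.induction_on
  exact wordAct_append _ _ _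

lemma act_zero (o : Option (ShuffleEnum a s t N)) : act o (zero N) = none := by
  cases o <;> rfl

lemma act_none (x : BMZ N) : act (none : Option (ShuffleEnum a s t N)) x = none := by
  induction x using Con.induction_on
  exact wordAct_none _

lemma act_gen (f : ShuffleEnum a s t N) (j : Fin (N - 1)) :
    act (some f) (gen N j) = step (some f) (some j) := rfl

lemma toBMZ_eq_mk_map (u : FreeMonoid (Fin (N - 1))) :
    toBMZ N u = (bmzCon N).mk' (FreeMonoid.map some u) := by
  have hom_eq : toBMZ N = (bmzCon N).mk'.comp (FreeMonoid.map some) :=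
    FreeMonoid.hom_eq fun _ => rfl
  rw [hom_eq, MonoidHom.comp_apply]

lemma act_toBMZ_eq_some {f g : ShuffleEnum a s t N} {u : FreeMonoid (Fin (N - 1))}
    (h : act (some f) (toBMZ N u) = some g) : g.1 = f.1 ∘ permHom N u := by
  rw [toBMZ_eq_mk_map] at h
  rw [← wordPerm_map_some]
  exact ((wordAct_eq_some_iff f g _).1 h).2

end Shuffles

theorem statement7_general (a : ℕ) (s t : Fin a → ℕ) (N : ℕ) :
    (∀ (f : ShuffleEnum a s t N) (j : Fin (N - 1)), Descends f j →
        ∃ g : ShuffleEnum a s t N, g.1 = fun p => f.1 (swapAt N j p)) ∧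
    ∃ act : Option (ShuffleEnum a s t N) → BMZ N → Option (ShuffleEnum a s t N),
      (∀ o, act o 1 = o) ∧
      (∀ o x y, act o (x * y) = act (act o x) y) ∧
      (∀ o, act o (zero N) = none) ∧
      (∀ x, act none x = none) ∧
      (∀ (f : ShuffleEnum a s t N) (j : Fin (N - 1)),
        (Descends f j →
          ∃ g : ShuffleEnum a s t N,
            act (some f) (gen N j) = some g ∧ g.1 = fun p => f.1 (swapAt N j p)) ∧
        (¬ Descends f j → act (some f) (gen N j) = none)) ∧
      (∀ u : FreeMonoid (Fin (N - 1)), toBMZ N u ≠ zero N →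
        ∀ f : ShuffleEnum a s t N,
          act (some f) (toBMZ N u) = none ∨
          ∃ g : ShuffleEnum a s t N,
            act (some f) (toBMZ N u) = some g ∧ g.1 = fun p => f.1 (permHom N u p)) := by
  refine ⟨fun f j hdesc => ⟨swapShuffle f j hdesc.ne', rfl⟩, act, act_one, act_mul, act_zero,
    act_none, fun f j => ⟨fun hdesc => ⟨_, by rw [act_gen, step, dif_pos hdesc], rfl⟩,
      fun hdesc => by rw [act_gen, step, dif_neg hdesc]⟩, fun u _ f => ?_⟩
  rcases h : act (some f) (toBMZ N u) with _ | g
  · exact .inl rfl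
  · exact .inr ⟨g, rfl, act_toBMZ_eq_some h⟩

/-- Let `N = |S(s,t)|` and identify shuffles on `S(s,t)` with
order-isomorphisms `f : ({1,…,N}, ≤) → (S(s,t), ⪯)`.  For a shuffle `f` and
`1 ≤ p ≤ N−1` define `f · β_p := f ∘ s_p` if `π₁(f(p)) > π₁(f(p+1))` and
`f · β_p := ∗` otherwise, where `∗` is an added basepoint (here `none`) fixed by all
the `β_p`.  Then:
(a) whenever `π₁(f(p)) > π₁(f(p+1))`, the composite `f ∘ s_p` is again (the
    order-isomorphism of) a shuffle on `S(s,t)`;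
(b) this assignment, together with `0` acting as the constant map at `∗`, extends to a
    right action of the braid monoid with zero `𝔹_N` on the set of shuffles together
    with `∗`; and
(c) for every non-zero `x ∈ 𝔹_N` and every shuffle `f`, either `f · x = f ∘ σ_x` or
    `f · x = ∗`, where `σ : 𝔹_N ∖ {0} → S_N` is the function with `σ_{β_p} = s_p` and
    `σ_{xy} = σ_x ∘ σ_y` (so `σ_x = σ̃(u)` for any word `u` representing `x`). -/
theorem statement7 (a : ℕ) (ha : 1 ≤ a) (s t : Fin a → ℕ) (hst : ∀ i, s i ≤ t i)
    (N : ℕ) (hN : Nonempty (Fin N ≃ Idx a s t)) :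
    (∀ (f : ShuffleEnum a s t N) (j : Fin (N - 1)), Descends f j →
        ∃ g : ShuffleEnum a s t N, g.1 = fun p => f.1 (swapAt N j p)) ∧
    ∃ act : Option (ShuffleEnum a s t N) → BMZ N → Option (ShuffleEnum a s t N),
      (∀ o, act o 1 = o) ∧
      (∀ o x y, act o (x * y) = act (act o x) y) ∧
      (∀ o, act o (zero N) = none) ∧
      (∀ x, act none x = none) ∧
      (∀ (f : ShuffleEnum a s t N) (j : Fin (N - 1)),
        (Descends f j →
          ∃ g : ShuffleEnum a s t N,
            act (some f) (gen N j) = some g ∧ g.1 = fun p => f.1 (swapAt N j p)) ∧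
        (¬ Descends f j → act (some f) (gen N j) = none)) ∧
      (∀ u : FreeMonoid (Fin (N - 1)), toBMZ N u ≠ zero N →
        ∀ f : ShuffleEnum a s t N,
          act (some f) (toBMZ N u) = none ∨
          ∃ g : ShuffleEnum a s t N,
            act (some f) (toBMZ N u) = some g ∧ g.1 = fun p => f.1 (permHom N u p)) :=
  statement7_general a s t N

end BraidMonoidZero
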